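/- arXiv:2503.04263 — 5 statements merged into one kernel-verified Lean document; each statement's English description precedes it below -/
import Mathlib

section
/- For all x, y ∈ ℝⁿ, ‖sort(x) − sort(y)‖₁ = min_{σ∈S_n} ‖x − σy‖₁, i.e. the sorting map is an isometry from (ℝⁿ, d_±) into ℝⁿ with the ℓ¹ norm. -/
open Finset Equiv

lemma abs_swap_le {a b c d : ℝ} (hab : a ≤ b) (hcd : c ≤ d) :
    |a - c| + |b - d| ≤ |a - d| + |b - c| := by
  rcases abs_cases (a - c) with ⟨h1, h1'⟩ | ⟨h1, h1'⟩ <;>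
  rcases abs_cases (b - d) with ⟨h2, h2'⟩ | ⟨h2, h2'⟩ <;>
  rcases abs_cases (a - d) with ⟨h3, h3'⟩ | ⟨h3, h3'⟩ <;>
  rcases abs_cases (b - c) with ⟨h4, h4'⟩ | ⟨h4, h4'⟩ <;>
  rw [h1, h2, h3, h4] <;> linarith

lemma key_lemma : ∀ (n : ℕ) (f g : Fin n → ℝ), Monotone f → Monotone g →
    ∀ σ : Equiv.Perm (Fin n), ∑ i, |f i - g i| ≤ ∑ i, |f i - g (σ i)| := by
  intro n
  induction n with
  | zero => intro f g _ _ σ; simp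
  | succ n ih =>
    intro f g hf hg σ
    set k : Fin (n+1) := σ⁻¹ 0 with hk
    set σ' : Equiv.Perm (Fin (n+1)) := σ * Equiv.swap 0 k with hσ'
    have hσ'0 : σ' 0 = 0 := by simp [hσ', hk]
    have claimA : ∑ i, |f i - g (σ' i)| ≤ ∑ i, |f i - g (σ i)| := by
      rcases eq_or_ne k 0 with h0 | h0
      · simp [hσ', ← h0]
      · have hre : ∑ i, |f i - g (σ' i)| = ∑ i, |f (Equiv.swap 0 k i) - g (σ i)| := by
          rw [← Equiv.sum_comp (Equiv.swap 0 k) (fun i => |f i - g (σ' i)|)]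
          simp [hσ', Equiv.Perm.mul_apply]
        rw [hre]
        have split : ∀ h : Fin (n+1) → ℝ,
            ∑ i, h i = ∑ i ∈ univ \ {0, k}, h i + (h 0 + h k) := by
          intro h
          rw [← Finset.sum_pair (Ne.symm h0), Finset.sum_sdiff (Finset.subset_univ _)]
        rw [split, split (fun i => |f i - g (σ i)|)]
        have hmid : ∀ i ∈ univ \ ({0, k} : Finset (Fin (n+1))),
            |f (Equiv.swap 0 k i) - g (σ i)| = |f i - g (σ i)| := by
          intro i hi
          simp only [Finset.mem_sdiff, Finset.mem_insert, Finset.mem_singleton] at hi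
          rw [Equiv.swap_apply_of_ne_of_ne (by tauto) (by tauto)]
        rw [Finset.sum_congr rfl hmid]
        gcongr ?_ + ?_
        · exact le_rfl
        · simp only [Equiv.swap_apply_left, Equiv.swap_apply_right]
          have hσk : σ k = 0 := by simp [hk]
          rw [hσk, add_comm]
          exact abs_swap_le (hf (Fin.zero_le k)) (hg (Fin.zero_le (σ 0)))
    refine le_trans ?_ claimA
    set τ : Equiv.Perm (Fin n) := (Equiv.Perm.decomposeFin σ').2 with hτ
    have hsymm : Equiv.Perm.decomposeFin.symm
        ((Equiv.Perm.decomposeFin σ').1, τ) = σ' := Equiv.symm_apply_apply _ _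
    have hp : (Equiv.Perm.decomposeFin σ').1 = 0 := by
      rw [← hσ'0]; conv_rhs => rw [← hsymm]
      simp
    have hsucc : ∀ i : Fin n, σ' i.succ = (τ i).succ := by
      intro i
      rw [← hsymm, hp, Equiv.Perm.decomposeFin_symm_apply_succ]
      simp
    rw [Fin.sum_univ_succ, Fin.sum_univ_succ (fun i => |f i - g (σ' i)|), hσ'0]
    gcongr ?_ + ?_
    · exact le_rfl
    · calc ∑ i : Fin n, |f i.succ - g i.succ|
          = ∑ i : Fin n, |(f ∘ Fin.succ) i - (g ∘ Fin.succ) i| := rfl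
        _ ≤ ∑ i : Fin n, |(f ∘ Fin.succ) i - (g ∘ Fin.succ) (τ i)| :=
            ih _ _ (hf.comp Fin.strictMono_succ.monotone)
              (hg.comp Fin.strictMono_succ.monotone) τ
        _ = ∑ i : Fin n, |f i.succ - g (σ' i.succ)| := by
            refine Finset.sum_congr rfl fun i _ => by rw [hsucc]; rfl

/-- The nondecreasing rearrangement (sorting) of a vector. -/
noncomputable def sortVec {n : ℕ} (x : Fin n → ℝ) : Fin n → ℝ := x ∘ Tuple.sort x

/-- Q(x) = (∏_{i<j} sign(x_j - x_i)) · min_{i<j} |x_j - x_i|. -/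
noncomputable def Qfun {n : ℕ} (x : Fin n → ℝ) : ℝ :=
  (∏ i : Fin n, ∏ j ∈ Finset.Ioi i, Real.sign (x j - x i)) *
  sInf {d : ℝ | ∃ i j : Fin n, i < j ∧ d = |x j - x i|}

/-- Minimal adjacent gap min_{j} (x_{j+1} - x_j). -/
noncomputable def minGap {n : ℕ} (x : Fin n → ℝ) : ℝ :=
  sInf {d : ℝ | ∃ i j : Fin n, (i : ℕ) + 1 = (j : ℕ) ∧ d = x j - x i}

/-- d_±(x,y) = min_{σ ∈ S_n} ‖x - σy‖₁ where (σy)_i = y_{σ(i)}. -/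
noncomputable def dpm {n : ℕ} (x y : Fin n → ℝ) : ℝ :=
  Finset.univ.inf' Finset.univ_nonempty fun σ : Equiv.Perm (Fin n) => ∑ i, |x i - y (σ i)|

/-- d_+(x,y) = min_{σ ∈ A_n} ‖x - σy‖₁. -/
noncomputable def dplus {n : ℕ} (x y : Fin n → ℝ) : ℝ :=
  Finset.univ.inf' Finset.univ_nonempty fun σ : alternatingGroup (Fin n) =>
    ∑ i, |x i - y ((σ : Equiv.Perm (Fin n)) i)|

theorem stmt2 (n : ℕ) (x y : Fin n → ℝ) :
    ∑ i, |sortVec x i - sortVec y i| = dpm x y := by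
  apply le_antisymm
  · -- LHS ≤ every candidate, in particular the inf
    apply Finset.le_inf'
    intro σ _
    have := key_lemma n (sortVec x) (sortVec y)
      (Tuple.monotone_sort x) (Tuple.monotone_sort y)
      ((Tuple.sort y)⁻¹ * σ * Tuple.sort x)
    refine this.trans (le_of_eq ?_)
    rw [← Equiv.sum_comp (Tuple.sort x) (fun i => |x i - y (σ i)|)]
    refine Finset.sum_congr rfl fun i _ => ?_
    simp [sortVec, Equiv.Perm.mul_apply]
  · -- the inf ≤ LHS: the sorted pairing is a candidate
    have h := Finset.inf'_le
      (fun σ : Equiv.Perm (Fin n) => ∑ i, |x i - y (σ i)|)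
      (Finset.mem_univ (Tuple.sort y * (Tuple.sort x)⁻¹))
    refine h.trans (le_of_eq ?_)
    rw [← Equiv.sum_comp (Tuple.sort x)
      (fun i => |x i - y ((Tuple.sort y * (Tuple.sort x)⁻¹) i)|)]
    refine Finset.sum_congr rfl fun i _ => ?_
    simp [sortVec, Equiv.Perm.mul_apply]
end

section
/- The function Q is Lipschitz continuous on ℝⁿ with respect to the ℓ¹ norm, with Lipschitz constant at most 2. -/
lemma pair_set_eq {n : ℕ} (x : Fin n → ℝ) :
    {d : ℝ | ∃ i j : Fin n, i < j ∧ d = |x j - x i|} =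
    ↑(((Finset.univ ×ˢ Finset.univ).filter fun p : Fin n × Fin n => p.1 < p.2).image
        fun p => |x p.2 - x p.1|) := by
  ext d
  simp only [Finset.coe_image, Set.mem_image, Finset.mem_coe, Finset.mem_filter,
    Finset.mem_product, Finset.mem_univ, true_and, Set.mem_setOf_eq, and_true]
  constructor
  · rintro ⟨i, j, hij, rfl⟩; exact ⟨(i,j), hij, rfl⟩
  · rintro ⟨⟨i,j⟩, hij, rfl⟩; exact ⟨i, j, hij, rfl⟩

lemma minfacts {n : ℕ} (hn : 2 ≤ n) (x : Fin n → ℝ) :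
    (∃ i j : Fin n, i < j ∧
      sInf {d : ℝ | ∃ i j : Fin n, i < j ∧ d = |x j - x i|} = |x j - x i|)
    ∧ ∀ i j : Fin n, i < j →
      sInf {d : ℝ | ∃ i j : Fin n, i < j ∧ d = |x j - x i|} ≤ |x j - x i| := by
  set S := {d : ℝ | ∃ i j : Fin n, i < j ∧ d = |x j - x i|} with hS
  have hfin : S.Finite := by rw [hS, pair_set_eq]; exact Finset.finite_toSet _
  have hne : S.Nonempty := by
    refine ⟨|x ⟨1, by omega⟩ - x ⟨0, by omega⟩|, ⟨0, by omega⟩, ⟨1, by omega⟩, ?_, rfl⟩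
    exact Fin.mk_lt_mk.mpr (by omega)
  constructor
  · have := hne.csInf_mem hfin
    obtain ⟨i, j, hij, h⟩ := this
    exact ⟨i, j, hij, h⟩
  · intro i j hij
    exact csInf_le hfin.bddBelow ⟨i, j, hij, rfl⟩

lemma abs_sign_le_one (a : ℝ) : |Real.sign a| ≤ 1 := by
  rcases lt_trichotomy a 0 with h|h|h
  · rw [Real.sign_of_neg h]; norm_num
  · simp [h]
  · rw [Real.sign_of_pos h]; norm_num

lemma abs_add_abs_le_of_sign_ne {a b : ℝ} (h : Real.sign a ≠ Real.sign b) :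
    |a| + |b| ≤ |a - b| := by
  rcases lt_trichotomy a 0 with ha|ha|ha <;> rcases lt_trichotomy b 0 with hb|hb|hb
  · exact absurd (by rw [Real.sign_of_neg ha, Real.sign_of_neg hb]) h
  · subst hb; rw [abs_zero, sub_zero, add_zero]
  · rw [abs_of_neg ha, abs_of_pos hb, abs_of_neg (by linarith : a - b < 0)]; linarith
  · subst ha; rw [abs_zero, zero_sub, zero_add, abs_neg]
  · exact absurd (by rw [ha, hb]) h
  · subst ha; rw [abs_zero, zero_sub, zero_add, abs_neg]
  · rw [abs_of_pos ha, abs_of_neg hb, abs_of_pos (by linarith : 0 < a - b)]; linarith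
  · subst hb; rw [abs_zero, sub_zero, add_zero]
  · exact absurd (by rw [Real.sign_of_pos ha, Real.sign_of_pos hb]) h

lemma two_le_sum {n : ℕ} {i j : Fin n} (hij : i ≠ j) (f : Fin n → ℝ) (hf : ∀ k, 0 ≤ f k) :
    f i + f j ≤ ∑ k, f k := by
  rw [← Finset.sum_pair hij]
  exact Finset.sum_le_sum_of_subset_of_nonneg (Finset.subset_univ _) (fun k _ _ => hf k)

theorem stmt8 (n : ℕ) (hn : 2 ≤ n) (x y : Fin n → ℝ) :
    |Qfun x - Qfun y| ≤ 2 * ∑ i, |x i - y i| := by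
  obtain ⟨⟨ix, jx, hijx, hmx⟩, hlex⟩ := minfacts hn x
  obtain ⟨⟨iy, jy, hijy, hmy⟩, hley⟩ := minfacts hn y
  set D := ∑ i, |x i - y i| with hDdef
  have hD0 : 0 ≤ D := Finset.sum_nonneg fun i _ => abs_nonneg _
  set Mx := sInf {d : ℝ | ∃ i j : Fin n, i < j ∧ d = |x j - x i|} with hMxdef
  set My := sInf {d : ℝ | ∃ i j : Fin n, i < j ∧ d = |y j - y i|} with hMydef
  have hMx0 : 0 ≤ Mx := hmx ▸ abs_nonneg _
  have hMy0 : 0 ≤ My := hmy ▸ abs_nonneg _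
  set Sx := ∏ i : Fin n, ∏ j ∈ Finset.Ioi i, Real.sign (x j - x i) with hSxdef
  set Sy := ∏ i : Fin n, ∏ j ∈ Finset.Ioi i, Real.sign (y j - y i) with hSydef
  have hQx : Qfun x = Sx * Mx := rfl
  have hQy : Qfun y = Sy * My := rfl
  have hSx1 : |Sx| ≤ 1 := by
    rw [hSxdef, Finset.abs_prod]
    refine Finset.prod_le_one (fun i _ => abs_nonneg _) (fun i _ => ?_)
    rw [Finset.abs_prod]
    exact Finset.prod_le_one (fun j _ => abs_nonneg _) (fun j _ => abs_sign_le_one _)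
  have hSy1 : |Sy| ≤ 1 := by
    rw [hSydef, Finset.abs_prod]
    refine Finset.prod_le_one (fun i _ => abs_nonneg _) (fun i _ => ?_)
    rw [Finset.abs_prod]
    exact Finset.prod_le_one (fun j _ => abs_nonneg _) (fun j _ => abs_sign_le_one _)
  have key : ∀ k l : Fin n, k ≠ l → |x k - y k| + |x l - y l| ≤ D :=
    fun k l hkl => two_le_sum hkl (fun m => |x m - y m|) (fun m => abs_nonneg _)
  by_cases hs : Sx = Sy
  · have h1 : Mx ≤ My + D := by
      have t1 : Mx ≤ |x jy - x iy| := hlex _ _ hijy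
      have t2 : |x jy - x iy| ≤ |y jy - y iy| + (|x jy - y jy| + |x iy - y iy|) := by
        have : x jy - x iy = (y jy - y iy) + ((x jy - y jy) - (x iy - y iy)) := by ring
        calc |x jy - x iy| ≤ |y jy - y iy| + |(x jy - y jy) - (x iy - y iy)| := by
              rw [this]; exact abs_add_le _ _
          _ ≤ _ := by
              have := abs_sub (x jy - y jy) (x iy - y iy)
              linarith
      have t3 : |x jy - y jy| + |x iy - y iy| ≤ D := key _ _ (ne_of_gt hijy)
      linarith [hmy ▸ le_refl My]
    have h2 : My ≤ Mx + D := by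
      have t1 : My ≤ |y jx - y ix| := hley _ _ hijx
      have t2 : |y jx - y ix| ≤ |x jx - x ix| + (|x jx - y jx| + |x ix - y ix|) := by
        have : y jx - y ix = (x jx - x ix) - ((x jx - y jx) - (x ix - y ix)) := by ring
        calc |y jx - y ix| ≤ |x jx - x ix| + |(x jx - y jx) - (x ix - y ix)| := by
              rw [this]; exact abs_sub _ _
          _ ≤ _ := by
              have := abs_sub (x jx - y jx) (x ix - y ix)
              linarith
      have t3 : |x jx - y jx| + |x ix - y ix| ≤ D := key _ _ (ne_of_gt hijx)
      linarith [hmx ▸ le_refl Mx]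
    have habs : |Mx - My| ≤ D := abs_sub_le_iff.mpr ⟨by linarith, by linarith⟩
    have heq : |Qfun x - Qfun y| = |Sy| * |Mx - My| := by
      rw [hQx, hQy, hs, ← mul_sub, abs_mul]
    rw [heq]
    have := mul_le_mul hSy1 habs (abs_nonneg _) zero_le_one
    linarith
  · obtain ⟨i, j, hij, hne⟩ :
        ∃ i j : Fin n, i < j ∧ Real.sign (x j - x i) ≠ Real.sign (y j - y i) := by
      by_contra hc
      push_neg at hc
      exact hs (Finset.prod_congr rfl fun i _ =>
        Finset.prod_congr rfl fun j hj => hc i j (Finset.mem_Ioi.mp hj))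
    have h1 := abs_add_abs_le_of_sign_ne hne
    have h2 : |(x j - x i) - (y j - y i)| ≤ |x j - y j| + |x i - y i| := by
      have : (x j - x i) - (y j - y i) = (x j - y j) - (x i - y i) := by ring
      rw [this]; exact abs_sub _ _
    have h3 : |x j - y j| + |x i - y i| ≤ D := key _ _ (ne_of_gt hij)
    have hMxb : Mx ≤ |x j - x i| := hlex _ _ hij
    have hMyb : My ≤ |y j - y i| := hley _ _ hij
    have hQxb : |Qfun x| ≤ Mx := by
      rw [hQx, abs_mul, abs_of_nonneg hMx0]
      nlinarith [abs_nonneg Sx]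
    have hQyb : |Qfun y| ≤ My := by
      rw [hQy, abs_mul, abs_of_nonneg hMy0]
      nlinarith [abs_nonneg Sy]
    calc |Qfun x - Qfun y| ≤ |Qfun x| + |Qfun y| := abs_sub _ _
      _ ≤ Mx + My := add_le_add hQxb hQyb
      _ ≤ D := by linarith
      _ ≤ 2 * D := by linarith
end

section
/- Let x̂, ŷ ∈ ℝⁿ be strictly increasing vectors and let τ ∈ S_n be a permutation with negative sign. Then Q(x̂) + Q(ŷ) ≤ ‖x̂ − τŷ‖₁, where Q(z) = min_{1≤j≤n−1}(z_{j+1} − z_j). -/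
/-! An odd permutation is not the identity, so it has an adjacent descent `i + 1 = j`, `τ j < τ i`.
There `x j - x i ≥ minGap x` and `y (τ i) - y (τ j) ≥ minGap y`, and these two gaps add up to
`(y (τ i) - x i) + (x j - y (τ j)) ≤ |x i - y (τ i)| + |x j - y (τ j)|`. -/

lemma minGap_le_sub_of_succ {n : ℕ} (x : Fin n → ℝ) {i j : Fin n} (hij : (i : ℕ) + 1 = j) :
    minGap x ≤ x j - x i := by
  refine csInf_le ?_ ⟨i, j, hij, rfl⟩
  refine (Set.finite_range fun p : Fin n × Fin n => x p.2 - x p.1).subset ?_ |>.bddBelow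
  rintro d ⟨a, b, -, rfl⟩
  exact ⟨(a, b), rfl⟩

lemma StrictMono.minGap_le_sub {n : ℕ} {x : Fin n → ℝ} (hx : StrictMono x) {a b : Fin n}
    (hab : a < b) : minGap x ≤ x b - x a := by
  let a' : Fin n := ⟨a + 1, lt_of_le_of_lt hab b.isLt⟩
  have hgap : minGap x ≤ x a' - x a := minGap_le_sub_of_succ x rfl
  have hle : x a' ≤ x b := hx.monotone (Fin.le_def.2 hab)
  linarith

lemma Equiv.Perm.exists_succ_descent_of_ne_one {n : ℕ} {τ : Equiv.Perm (Fin n)} (hτ : τ ≠ 1) :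
    ∃ i j : Fin n, (i : ℕ) + 1 = j ∧ τ j < τ i := by
  cases n with
  | zero => exact absurd (Subsingleton.elim τ 1) hτ
  | succ m =>
    contrapose! hτ
    have hmono : StrictMono τ := Fin.strictMono_iff_lt_succ.2 fun i =>
      (hτ _ _ rfl).lt_of_ne (τ.injective.ne Fin.castSucc_lt_succ.ne)
    exact Equiv.ext fun _ => hmono.apply_eq

lemma minGap_add_minGap_le_of_descent {n : ℕ} {x y : Fin n → ℝ} (hy : StrictMono y)
    {τ : Equiv.Perm (Fin n)} {i j : Fin n} (hij : (i : ℕ) + 1 = j) (hdesc : τ j < τ i) :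
    minGap x + minGap y ≤ |x i - y (τ i)| + |x j - y (τ j)| := by
  have hgx := minGap_le_sub_of_succ x hij
  have hgy := hy.minGap_le_sub hdesc
  have hi := neg_abs_le (x i - y (τ i))
  have hj := le_abs_self (x j - y (τ j))
  linarith

theorem stmt10_general (n : ℕ) (x y : Fin n → ℝ)
    (hy : StrictMono y)
    (τ : Equiv.Perm (Fin n)) (hτ : Equiv.Perm.sign τ = -1) :
    minGap x + minGap y ≤ ∑ i, |x i - y (τ i)| := by
  obtain ⟨i, j, hij, hdesc⟩ := τ.exists_succ_descent_of_ne_one (by rintro rfl; simp at hτ)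
  have hne : i ≠ j := fun h => by subst h; omega
  calc minGap x + minGap y ≤ |x i - y (τ i)| + |x j - y (τ j)| :=
        minGap_add_minGap_le_of_descent hy hij hdesc
    _ = ∑ k ∈ {i, j}, |x k - y (τ k)| := by rw [Finset.sum_pair hne]
    _ ≤ ∑ k, |x k - y (τ k)| :=
        Finset.sum_le_sum_of_subset_of_nonneg (Finset.subset_univ _) fun _ _ _ => abs_nonneg _

theorem stmt10 (n : ℕ) (hn : 2 ≤ n) (x y : Fin n → ℝ)
    (hx : StrictMono x) (hy : StrictMono y)
    (τ : Equiv.Perm (Fin n)) (hτ : Equiv.Perm.sign τ = -1) :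
    minGap x + minGap y ≤ ∑ i, |x i - y (τ i)| :=
  stmt10_general n x y hy τ hτ
end

section
/- The map F(x) = (sort(x), Q(x)) separates A_n-orbits: if F(x) = F(y) then there exists an even permutation σ ∈ A_n with y = σx. -/
open Finset Function

/-! Equal sorted vectors give `y = x ∘ π` for some permutation `π`. If `x` has a repeated
entry, composing `π` with the transposition of two equal entries changes its parity without
changing `x ∘ π`. Otherwise `Q(x) ≠ 0`, and since the sign product in `Q` is the sign of the
Vandermonde determinant while the minimal gap is permutation invariant,
`Q(x ∘ π) = sign(π) Q(x)`; so `Q(x) = Q(y)` forces `π` to be even. -/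

theorem Real.sign_eq_coe_sign (r : ℝ) : Real.sign r = (SignType.sign r : ℝ) := by
  rcases lt_trichotomy r 0 with h | rfl | h
  · simp [Real.sign_of_neg h, h]
  · simp
  · simp [Real.sign_of_pos h, h]

theorem Real.sign_prod {ι : Type*} (s : Finset ι) (f : ι → ℝ) :
    Real.sign (∏ i ∈ s, f i) = ∏ i ∈ s, Real.sign (f i) := by
  simp only [Real.sign_eq_coe_sign]
  exact map_prod (SignType.castHom.comp signHom : ℝ →*₀ ℝ) f s

theorem Real.sign_mul (a b : ℝ) : Real.sign (a * b) = Real.sign a * Real.sign b := by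
  simp only [Real.sign_eq_coe_sign]
  exact map_mul (SignType.castHom.comp signHom : ℝ →*₀ ℝ) a b

theorem Real.sign_units_intCast (u : ℤˣ) : Real.sign ((u : ℤ) : ℝ) = ((u : ℤ) : ℝ) := by
  rcases Int.units_eq_one_or u with rfl | rfl <;> simp [Real.sign_of_neg, Real.sign_one]

section

variable {n : ℕ}

noncomputable def signProd (x : Fin n → ℝ) : ℝ :=
  ∏ i : Fin n, ∏ j ∈ Ioi i, Real.sign (x j - x i)

def pairDists (x : Fin n → ℝ) : Set ℝ :=
  {d : ℝ | ∃ i j : Fin n, i < j ∧ d = |x j - x i|}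

theorem Qfun_eq_signProd_mul (x : Fin n → ℝ) : Qfun x = signProd x * sInf (pairDists x) := rfl

theorem signProd_eq_sign_det_vandermonde (x : Fin n → ℝ) :
    signProd x = Real.sign (Matrix.vandermonde x).det := by
  rw [Matrix.det_vandermonde, Real.sign_prod]
  exact Finset.prod_congr rfl fun i _ => (Real.sign_prod _ _).symm

theorem signProd_comp_perm (x : Fin n → ℝ) (π : Equiv.Perm (Fin n)) :
    signProd (x ∘ π) = (Equiv.Perm.sign π : ℤ) * signProd x := by
  have hV : Matrix.vandermonde (x ∘ π) = (Matrix.vandermonde x).submatrix π id := by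
    ext i j; simp [Matrix.vandermonde]
  rw [signProd_eq_sign_det_vandermonde, signProd_eq_sign_det_vandermonde, hV,
    Matrix.det_permute, Real.sign_mul, Real.sign_units_intCast]

theorem signProd_ne_zero {x : Fin n → ℝ} (hx : Injective x) : signProd x ≠ 0 := by
  rw [signProd_eq_sign_det_vandermonde, Ne, Real.sign_eq_zero_iff]
  exact (Matrix.det_vandermonde_ne_zero_iff).mpr hx

theorem pairDists_eq_setOf_ne (x : Fin n → ℝ) :
    pairDists x = {d : ℝ | ∃ i j : Fin n, i ≠ j ∧ d = |x j - x i|} := by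
  ext d; constructor
  · rintro ⟨i, j, hij, rfl⟩; exact ⟨i, j, hij.ne, rfl⟩
  · rintro ⟨i, j, hij, rfl⟩
    rcases hij.lt_or_gt with h | h
    · exact ⟨i, j, h, rfl⟩
    · exact ⟨j, i, h, abs_sub_comm _ _⟩

theorem pairDists_comp_perm (x : Fin n → ℝ) (π : Equiv.Perm (Fin n)) :
    pairDists (x ∘ π) = pairDists x := by
  rw [pairDists_eq_setOf_ne, pairDists_eq_setOf_ne]
  ext d; constructor
  · rintro ⟨i, j, hij, rfl⟩
    exact ⟨π i, π j, π.injective.ne hij, rfl⟩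
  · rintro ⟨i, j, hij, rfl⟩
    exact ⟨π.symm i, π.symm j, π.symm.injective.ne hij, by simp⟩

theorem Qfun_comp_perm (x : Fin n → ℝ) (π : Equiv.Perm (Fin n)) :
    Qfun (x ∘ π) = (Equiv.Perm.sign π : ℤ) * Qfun x := by
  rw [Qfun_eq_signProd_mul, Qfun_eq_signProd_mul, signProd_comp_perm, pairDists_comp_perm,
    mul_assoc]

theorem sInf_pairDists_pos (hn : 2 ≤ n) {x : Fin n → ℝ} (hx : Injective x) :
    0 < sInf (pairDists x) := by
  have hfin : (pairDists x).Finite :=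
    (Set.finite_range fun p : Fin n × Fin n => |x p.2 - x p.1|).subset
      fun d ⟨i, j, _, hd⟩ => ⟨(i, j), hd.symm⟩
  have hne : (pairDists x).Nonempty :=
    ⟨_, ⟨0, by omega⟩, ⟨1, by omega⟩, Fin.mk_lt_mk.mpr one_pos, rfl⟩
  obtain ⟨i, j, hij, hd⟩ := hne.csInf_mem hfin
  rw [hd]
  exact abs_pos.mpr (sub_ne_zero.mpr (hx.ne hij.ne'))

theorem Qfun_ne_zero (hn : 2 ≤ n) {x : Fin n → ℝ} (hx : Injective x) : Qfun x ≠ 0 := by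
  rw [Qfun_eq_signProd_mul]
  exact mul_ne_zero (signProd_ne_zero hx) (sInf_pairDists_pos hn hx).ne'

theorem sign_eq_one_of_Qfun_comp_perm_eq (hn : 2 ≤ n) {x : Fin n → ℝ} (hx : Injective x)
    {π : Equiv.Perm (Fin n)} (h : Qfun (x ∘ π) = Qfun x) : Equiv.Perm.sign π = 1 := by
  rw [Qfun_comp_perm] at h
  have h1 : ((Equiv.Perm.sign π : ℤ) : ℝ) = 1 :=
    mul_right_cancel₀ (Qfun_ne_zero hn hx) (h.trans (one_mul _).symm)
  exact Units.val_eq_one.mp (by exact_mod_cast h1)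

theorem exists_perm_eq_comp_of_sortVec_eq {x y : Fin n → ℝ} (h : sortVec x = sortVec y) :
    ∃ π : Equiv.Perm (Fin n), y = x ∘ π := by
  refine ⟨Tuple.sort x * (Tuple.sort y)⁻¹, funext fun i => ?_⟩
  simpa [sortVec] using (congrFun h ((Tuple.sort y)⁻¹ i)).symm

theorem exists_mem_alternatingGroup_comp_eq_of_not_injective {α : Type*} {x : Fin n → α}
    (hx : ¬Injective x) (π : Equiv.Perm (Fin n)) :
    ∃ σ ∈ alternatingGroup (Fin n), x ∘ σ = x ∘ π := by
  obtain ⟨a, b, hab, hne⟩ := Function.not_injective_iff.mp hx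
  have hswap : x ∘ Equiv.swap a b = x := by
    funext k
    rcases eq_or_ne k a with rfl | hka
    · simp [hab]
    rcases eq_or_ne k b with rfl | hkb
    · simp [hab]
    · simp [Equiv.swap_apply_of_ne_of_ne hka hkb]
  rcases Int.units_eq_one_or (Equiv.Perm.sign π) with hs | hs
  · exact ⟨π, Equiv.Perm.mem_alternatingGroup.mpr hs, rfl⟩
  · refine ⟨Equiv.swap a b * π, ?_, ?_⟩
    · rw [Equiv.Perm.mem_alternatingGroup, Equiv.Perm.sign_mul, Equiv.Perm.sign_swap hne, hs]
      rfl
    · rw [Equiv.Perm.coe_mul, ← Function.comp_assoc, hswap]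

end

theorem stmt14 (n : ℕ) (hn : 2 ≤ n) (x y : Fin n → ℝ)
    (h : sortVec x = sortVec y ∧ Qfun x = Qfun y) :
    ∃ σ ∈ alternatingGroup (Fin n), y = x ∘ σ := by
  obtain ⟨hsort, hQ⟩ := h
  obtain ⟨π, rfl⟩ := exists_perm_eq_comp_of_sortVec_eq hsort
  by_cases hx : Injective x
  · exact ⟨π, Equiv.Perm.mem_alternatingGroup.mpr
      (sign_eq_one_of_Qfun_comp_perm_eq hn hx hQ.symm), rfl⟩
  · obtain ⟨σ, hσ, hσπ⟩ := exists_mem_alternatingGroup_comp_eq_of_not_injective hx π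
    exact ⟨σ, hσ, hσπ.symm⟩
end

section
/- For all x, y ∈ ℝⁿ, d_±(x,y) ≤ d_+(x,y) ≤ d_±(x,y) + 2·min(Q̂(x), Q̂(y)), where Q̂(z) denotes the minimal gap min_{1≤j≤n−1}(sort(z)_{j+1} − sort(z)_j). -/
/-!
The first inequality holds because `A_n ⊆ S_n`. For the second, let `σ` be optimal for `d_±`
and let `a ≠ b`. Exchanging the targets of `a` and `b` changes the cost only in two terms, and by
the triangle inequality it increases the cost by at most `2 min(|x a - x b|, |y (σ a) - y (σ b)|)`.
One of `σ` and `σ * swap a b` is even, so `d_+` is bounded by the larger of their costs. Taking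
`a, b` to realise the minimal gap of `x`, or `σ a, σ b` to realise the minimal gap of `y`, gives
the bound.
-/

open Equiv Finset

theorem abs_sub_add_abs_sub_le_add_two_mul_min (u v s t : ℝ) :
    |u - t| + |v - s| ≤ |u - s| + |v - t| + 2 * min |u - v| |s - t| := by
  have huv := abs_sub_comm u v
  have hst := abs_sub_comm s t
  rcases min_choice |u - v| |s - t| with h | h <;> rw [h]
  · linarith [abs_sub_le u v t, abs_sub_le v u s]
  · linarith [abs_sub_le u s t, abs_sub_le v t s]

theorem sum_abs_sub_mul_swap_le {α : Type*} [Fintype α] [DecidableEq α] (x y : α → ℝ)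
    (σ : Perm α) {a b : α} (hab : a ≠ b) :
    ∑ i, |x i - y ((σ * swap a b) i)| ≤
      ∑ i, |x i - y (σ i)| + 2 * min |x a - x b| |y (σ a) - y (σ b)| := by
  have hdiff : ∑ i, (|x i - y ((σ * swap a b) i)| - |x i - y (σ i)|) =
      (|x a - y (σ b)| - |x a - y (σ a)|) + (|x b - y (σ a)| - |x b - y (σ b)|) := by
    refine (Fintype.sum_eq_add a b hab fun i hi => ?_).trans ?_
    · simp [swap_apply_of_ne_of_ne hi.1 hi.2]
    · simp
  rw [Finset.sum_sub_distrib] at hdiff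
  linarith [abs_sub_add_abs_sub_le_add_two_mul_min (x a) (x b) (y (σ a)) (y (σ b))]

theorem Equiv.Perm.mem_alternatingGroup_or_mul_swap_mem {α : Type*} [Fintype α]
    [DecidableEq α] (σ : Perm α) {a b : α} (hab : a ≠ b) :
    σ ∈ alternatingGroup α ∨ σ * swap a b ∈ alternatingGroup α := by
  simp only [Perm.mem_alternatingGroup, map_mul, Perm.sign_swap hab]
  rcases Int.units_eq_one_or (Perm.sign σ) with h | h <;> simp [h]

section Distances

variable {n : ℕ} (x y : Fin n → ℝ)

theorem dplus_le_of_mem_alternatingGroup {τ : Perm (Fin n)} (hτ : τ ∈ alternatingGroup (Fin n)) :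
    dplus x y ≤ ∑ i, |x i - y (τ i)| :=
  Finset.inf'_le _ (mem_univ (⟨τ, hτ⟩ : alternatingGroup (Fin n)))

theorem dpm_le_dplus : dpm x y ≤ dplus x y := by
  obtain ⟨τ, -, hτ⟩ := Finset.exists_mem_eq_inf' univ_nonempty
    fun τ : alternatingGroup (Fin n) => ∑ i, |x i - y ((τ : Perm (Fin n)) i)|
  rw [dplus, hτ]
  exact Finset.inf'_le _ (mem_univ _)

theorem dplus_le_max_mul_swap (σ : Perm (Fin n)) {a b : Fin n} (hab : a ≠ b) :
    dplus x y ≤ max (∑ i, |x i - y (σ i)|) (∑ i, |x i - y ((σ * swap a b) i)|) := by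
  rcases σ.mem_alternatingGroup_or_mul_swap_mem hab with h | h
  · exact (dplus_le_of_mem_alternatingGroup x y h).trans (le_max_left _ _)
  · exact (dplus_le_of_mem_alternatingGroup x y h).trans (le_max_right _ _)

theorem exists_perm_forall_dplus_le_dpm_add :
    ∃ σ : Perm (Fin n), ∀ a b, a ≠ b →
      dplus x y ≤ dpm x y + 2 * min |x a - x b| |y (σ a) - y (σ b)| := by
  obtain ⟨σ, -, hσ⟩ := Finset.exists_mem_eq_inf' univ_nonempty
    fun σ : Perm (Fin n) => ∑ i, |x i - y (σ i)|
  refine ⟨σ, fun a b hab => ?_⟩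
  have hmin : 0 ≤ min |x a - x b| |y (σ a) - y (σ b)| :=
    le_min (abs_nonneg _) (abs_nonneg _)
  rw [dpm, hσ]
  exact (dplus_le_max_mul_swap x y σ hab).trans
    (max_le (by linarith) (sum_abs_sub_mul_swap_le x y σ hab))

end Distances

theorem exists_adjacent_minGap_eq {n : ℕ} (hn : 2 ≤ n) (z : Fin n → ℝ) :
    ∃ i j : Fin n, (i : ℕ) + 1 = j ∧ minGap z = z j - z i := by
  set gaps := {d : ℝ | ∃ i j : Fin n, (i : ℕ) + 1 = j ∧ d = z j - z i}
  have hfin : gaps.Finite :=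
    (Set.finite_range fun p : Fin n × Fin n => z p.2 - z p.1).subset
      (by rintro d ⟨i, j, -, rfl⟩; exact ⟨(i, j), rfl⟩)
  have hne : gaps.Nonempty := ⟨_, ⟨0, by omega⟩, ⟨1, by omega⟩, rfl, rfl⟩
  exact hne.csInf_mem hfin

theorem exists_abs_sub_eq_minGap_sortVec {n : ℕ} (hn : 2 ≤ n) (z : Fin n → ℝ) :
    ∃ a b : Fin n, a ≠ b ∧ |z a - z b| = minGap (sortVec z) := by
  obtain ⟨i, j, hij, hgap⟩ := exists_adjacent_minGap_eq hn (sortVec z)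
  have hlt : i < j := by rw [Fin.lt_def]; omega
  have hle : sortVec z i ≤ sortVec z j := Tuple.monotone_sort z hlt.le
  refine ⟨Tuple.sort z j, Tuple.sort z i, fun h => hlt.ne' ((Tuple.sort z).injective h), ?_⟩
  rw [hgap, ← abs_of_nonneg (sub_nonneg.mpr hle)]
  rfl

theorem stmt16 (n : ℕ) (hn : 2 ≤ n) (x y : Fin n → ℝ) :
    dpm x y ≤ dplus x y ∧
    dplus x y ≤ dpm x y + 2 * min (minGap (sortVec x)) (minGap (sortVec y)) := by
  refine ⟨dpm_le_dplus x y, ?_⟩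
  obtain ⟨σ, hσ⟩ := exists_perm_forall_dplus_le_dpm_add x y
  obtain ⟨a, b, hab, hx⟩ := exists_abs_sub_eq_minGap_sortVec hn x
  obtain ⟨p, q, hpq, hy⟩ := exists_abs_sub_eq_minGap_sortVec hn y
  have hbound_x : dplus x y ≤ dpm x y + 2 * minGap (sortVec x) := by
    refine (hσ a b hab).trans ?_
    rw [hx]
    gcongr
    exact min_le_left _ _
  have hbound_y : dplus x y ≤ dpm x y + 2 * minGap (sortVec y) := by
    refine (hσ (σ.symm p) (σ.symm q) (σ.symm.injective.ne hpq)).trans ?_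
    rw [apply_symm_apply, apply_symm_apply, hy]
    gcongr
    exact min_le_right _ _
  rw [mul_min_of_nonneg _ _ zero_le_two, ← min_add_add_left]
  exact le_min hbound_x hbound_y
end
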